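/- One step of the Burnside process from the longest element samples the Mallows measure: let w₀ ∈ S_n be the permutation w₀(i) = n+1−i, and let P be the Burnside kernel for the left-multiplication action of U on X = G/B. Then for every σ ∈ S_n, Σ_{y ∈ C_σ} P(M_{w₀}·B, y) = q^{ℓ(σ)} / |G/B|, where C_σ = {u·M_σ·B : u ∈ U} ⊆ G/B is the Bruhat cell of σ. -/

import Mathlib

/-- `u` is a unipotent upper triangular matrix (upper triangular with all
diagonal entries equal to `1`), i.e. `u` lies in `U`. -/
def IsUnipUpper {n : ℕ} {F : Type*} [Field F] (u : Matrix (Fin n) (Fin n) F) : Prop :=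
  (∀ i j : Fin n, j < i → u i j = 0) ∧ ∀ i : Fin n, u i i = 1

/-- `b` is an invertible upper triangular matrix (upper triangular with all
diagonal entries nonzero), i.e. `b` lies in the Borel subgroup `B`. -/
def IsInvUpper {n : ℕ} {F : Type*} [Field F] (b : Matrix (Fin n) (Fin n) F) : Prop :=
  (∀ i j : Fin n, j < i → b i j = 0) ∧ ∀ i : Fin n, b i i ≠ 0

/-- The permutation matrix `M_σ` with `(M_σ)_{ij} = 1` if `j = σ(i)` and `0` otherwise. -/
def permMat (n : ℕ) (F : Type*) [Field F] (σ : Equiv.Perm (Fin n)) :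
    Matrix (Fin n) (Fin n) F :=
  Matrix.of fun i j => if σ i = j then 1 else 0

/-- The number of inversions `ℓ(σ) = |{(i,j) : i < j, σ(i) > σ(j)}|`. -/
def lenPerm {n : ℕ} (σ : Equiv.Perm (Fin n)) : ℕ :=
  (Finset.univ.filter fun p : Fin n × Fin n => p.1 < p.2 ∧ σ p.2 < σ p.1).card

/-- The left coset `g·B` of the Borel subgroup `B`, as a set of matrices. -/
def cosetOf {n : ℕ} {F : Type*} [Field F] (g : Matrix (Fin n) (Fin n) F) :
    Set (Matrix (Fin n) (Fin n) F) :=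
  {x | ∃ b : Matrix (Fin n) (Fin n) F, IsInvUpper b ∧ x = g * b}

/-- The flag space `X = G/B`: the set of left cosets `g·B` with `g ∈ GL_n(F)`,
each realized as a subset of the matrix algebra. -/
def flagSpace (n : ℕ) (F : Type*) [Field F] : Set (Set (Matrix (Fin n) (Fin n) F)) :=
  {S | ∃ g : Matrix (Fin n) (Fin n) F, IsUnit g.det ∧ S = cosetOf g}

/-- The stabilizer `stab_U(S) = {u ∈ U : u·S = S}` of a coset `S ∈ G/B` for the
left-multiplication action of `U` on `G/B`. -/
def stabU {n : ℕ} {F : Type*} [Field F] (S : Set (Matrix (Fin n) (Fin n) F)) :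
    Set (Matrix (Fin n) (Fin n) F) :=
  {u | IsUnipUpper u ∧ (fun x => u * x) '' S = S}

/-- The fixed-point set `Fix_X(u) = {S ∈ X : u·S = S}` of `u` acting on
`X = G/B` by left multiplication. -/
def fixFlags {n : ℕ} {F : Type*} [Field F] (u : Matrix (Fin n) (Fin n) F) :
    Set (Set (Matrix (Fin n) (Fin n) F)) :=
  {S | S ∈ flagSpace n F ∧ (fun x => u * x) '' S = S}

/-- The Burnside kernel
`P(x,y) = (1/|stab_U(x)|) · Σ_{u ∈ stab_U(x) ∩ stab_U(y)} 1/|Fix_X(u)|`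
for the left-multiplication action of `U` on `X = G/B`. -/
noncomputable def burnsideFlagKernel {n : ℕ} {F : Type*} [Field F]
    (S T : Set (Matrix (Fin n) (Fin n) F)) : ℝ :=
  (Nat.card ↥(stabU S) : ℝ)⁻¹ *
    ∑ᶠ u ∈ stabU S ∩ stabU T, (Nat.card ↥(fixFlags u) : ℝ)⁻¹


/-!
A unipotent `u` fixes the flag `M_σ B` iff `M_σ⁻¹ u M_σ` is upper triangular, i.e. iff `u`
vanishes at the inversions of `σ`; so the stabilizer of `M_σ B` in `U` consists of the
unipotent matrices supported on the non-inversions of `σ`, a group of order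
`q ^ (n(n-1)/2 - ℓ(σ))`. Every pair is an inversion of `w₀`, so `stab_U(w₀B) = {1}` and
`P(w₀B, y) = 1 / |Fix(1)| = 1 / |G/B|` for every `y`. The sum is therefore `|C_σ| / |G/B|`, and
orbit–stabilizer gives `|C_σ| = |U| / |stab_U(M_σ B)| = q ^ ℓ(σ)`.
-/

theorem finsum_mem_const {α M : Type*} [AddCommMonoid M] {s : Set α} (hs : s.Finite) (c : M) :
    ∑ᶠ _ ∈ s, c = s.ncard • c := by
  rw [finsum_mem_eq_finite_toFinset_sum _ hs, Finset.sum_const, Set.ncard_eq_toFinset_card _ hs]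

namespace Matrix.IsUpperTriangular

variable {m R : Type*} [Fintype m] [LinearOrder m]

theorem mul_apply_self [NonUnitalNonAssocSemiring R] {A B : Matrix m m R}
    (hA : A.IsUpperTriangular) (hB : B.IsUpperTriangular) (i : m) :
    (A * B) i i = A i i * B i i := by
  rw [Matrix.mul_apply]
  refine Finset.sum_eq_single i (fun k _ hk => ?_) (by simp)
  rcases lt_or_gt_of_ne hk with h | h
  · rw [hA h, zero_mul]
  · rw [hB h, mul_zero]

theorem inv_apply_self [DecidableEq m] [Field R] {A : Matrix m m R}
    (hA : A.IsUpperTriangular) (hdet : IsUnit A.det) (i : m) :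
    A⁻¹ i i = (A i i)⁻¹ := by
  have := A.invertibleOfIsUnitDet hdet
  have hinv : A⁻¹.IsUpperTriangular := Matrix.blockTriangular_inv_of_blockTriangular hA
  have h := congrFun₂ (Matrix.mul_nonsing_inv A hdet) i i
  rw [hA.mul_apply_self hinv, Matrix.one_apply_eq] at h
  exact eq_inv_of_mul_eq_one_right h

end Matrix.IsUpperTriangular

section Triangular

variable {n : ℕ} {F : Type*} [Field F]

theorem IsInvUpper.isUpperTriangular {b : Matrix (Fin n) (Fin n) F} (hb : IsInvUpper b) :
    b.IsUpperTriangular := fun i j h => hb.1 i j h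

theorem IsUnipUpper.isInvUpper {u : Matrix (Fin n) (Fin n) F} (hu : IsUnipUpper u) :
    IsInvUpper u :=
  ⟨hu.1, fun i => by simp [hu.2 i]⟩

theorem IsUnipUpper.one : IsUnipUpper (1 : Matrix (Fin n) (Fin n) F) :=
  ⟨fun _ _ h => Matrix.one_apply_ne h.ne', Matrix.one_apply_eq⟩

theorem IsInvUpper.one : IsInvUpper (1 : Matrix (Fin n) (Fin n) F) :=
  IsUnipUpper.one.isInvUpper

theorem IsInvUpper.mul {a b : Matrix (Fin n) (Fin n) F} (ha : IsInvUpper a)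
    (hb : IsInvUpper b) : IsInvUpper (a * b) :=
  ⟨fun _ _ h => ha.isUpperTriangular.mul hb.isUpperTriangular h, fun i => by
    rw [ha.isUpperTriangular.mul_apply_self hb.isUpperTriangular]
    exact mul_ne_zero (ha.2 i) (hb.2 i)⟩

theorem IsUnipUpper.mul {u v : Matrix (Fin n) (Fin n) F} (hu : IsUnipUpper u)
    (hv : IsUnipUpper v) : IsUnipUpper (u * v) :=
  ⟨(hu.isInvUpper.mul hv.isInvUpper).1, fun i => by
    rw [hu.isInvUpper.isUpperTriangular.mul_apply_self hv.isInvUpper.isUpperTriangular,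
      hu.2, hv.2, one_mul]⟩

theorem IsInvUpper.isUnit_det {b : Matrix (Fin n) (Fin n) F} (hb : IsInvUpper b) :
    IsUnit b.det := by
  rw [Matrix.det_of_isUpperTriangular hb.isUpperTriangular]
  exact (Finset.prod_ne_zero_iff.2 fun i _ => hb.2 i).isUnit

theorem IsInvUpper.inv {b : Matrix (Fin n) (Fin n) F} (hb : IsInvUpper b) :
    IsInvUpper b⁻¹ := by
  have := b.invertibleOfIsUnitDet hb.isUnit_det
  refine ⟨fun i j h => Matrix.blockTriangular_inv_of_blockTriangular hb.isUpperTriangular h,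
    fun i => ?_⟩
  rw [hb.isUpperTriangular.inv_apply_self hb.isUnit_det]
  exact inv_ne_zero (hb.2 i)

theorem IsUnipUpper.inv {u : Matrix (Fin n) (Fin n) F} (hu : IsUnipUpper u) :
    IsUnipUpper u⁻¹ :=
  ⟨hu.isInvUpper.inv.1, fun i => by
    rw [hu.isInvUpper.isUpperTriangular.inv_apply_self hu.isInvUpper.isUnit_det, hu.2, inv_one]⟩

theorem IsUnipUpper.isUnit {u : Matrix (Fin n) (Fin n) F} (hu : IsUnipUpper u) : IsUnit u :=
  (Matrix.isUnit_iff_isUnit_det u).2 hu.isInvUpper.isUnit_det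

end Triangular

section Cosets

variable {n : ℕ} {F : Type*} [Field F]

theorem image_mul_cosetOf (a g : Matrix (Fin n) (Fin n) F) :
    (fun x => a * x) '' cosetOf g = cosetOf (a * g) := by
  ext x
  constructor
  · rintro ⟨y, ⟨b, hb, rfl⟩, rfl⟩
    exact ⟨b, hb, (mul_assoc a g b).symm⟩
  · rintro ⟨b, hb, rfl⟩
    exact ⟨g * b, ⟨b, hb, rfl⟩, (mul_assoc a g b).symm⟩

theorem cosetOf_mul_of_isInvUpper (g : Matrix (Fin n) (Fin n) F) {b : Matrix (Fin n) (Fin n) F}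
    (hb : IsInvUpper b) : cosetOf (g * b) = cosetOf g := by
  ext x
  constructor
  · rintro ⟨b', hb', rfl⟩
    exact ⟨b * b', hb.mul hb', mul_assoc g b b'⟩
  · rintro ⟨b', hb', rfl⟩
    refine ⟨b⁻¹ * b', hb.inv.mul hb', ?_⟩
    rw [← mul_assoc, mul_assoc g, Matrix.mul_nonsing_inv _ hb.isUnit_det, mul_one]

theorem cosetOf_eq_cosetOf_iff (g g' : Matrix (Fin n) (Fin n) F) :
    cosetOf g' = cosetOf g ↔ ∃ b, IsInvUpper b ∧ g' = g * b := by
  refine ⟨fun h => ?_, fun ⟨b, hb, h⟩ => h ▸ cosetOf_mul_of_isInvUpper g hb⟩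
  have hg' : g' ∈ cosetOf g' := ⟨1, IsInvUpper.one, (mul_one g').symm⟩
  rwa [h] at hg'

end Cosets

section PermMat

variable {n : ℕ} {F : Type*} [Field F]

theorem permMat_eq_toMatrix (σ : Equiv.Perm (Fin n)) :
    permMat n F σ = σ.toPEquiv.toMatrix := by
  ext i j
  simp [permMat, PEquiv.toMatrix_apply]

theorem permMat_mul (σ : Equiv.Perm (Fin n)) (A : Matrix (Fin n) (Fin n) F) :
    permMat n F σ * A = A.submatrix σ id := by
  rw [permMat_eq_toMatrix, PEquiv.toMatrix_toPEquiv_mul]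

theorem mul_permMat (σ : Equiv.Perm (Fin n)) (A : Matrix (Fin n) (Fin n) F) :
    A * permMat n F σ = A.submatrix id σ.symm := by
  rw [permMat_eq_toMatrix, PEquiv.mul_toMatrix_toPEquiv]

theorem image_mul_cosetOf_permMat_eq_iff (σ : Equiv.Perm (Fin n))
    {u : Matrix (Fin n) (Fin n) F} (hu : IsUnipUpper u) :
    (fun x => u * x) '' cosetOf (permMat n F σ) = cosetOf (permMat n F σ) ↔
      ∀ i j, σ j < σ i → u i j = 0 := by
  rw [image_mul_cosetOf, cosetOf_eq_cosetOf_iff, mul_permMat]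
  constructor
  · rintro ⟨b, hb, hub⟩ i j hij
    have h := congrFun₂ hub i (σ j)
    rw [permMat_mul] at h
    simpa [hb.1 _ _ hij] using h
  · intro h
    refine ⟨u.submatrix σ.symm σ.symm, ⟨fun a c hca => h _ _ (by simpa using hca),
      fun a => by simp [hu.2]⟩, ?_⟩
    ext i j
    simp [permMat_mul]

end PermMat

section Stabilizers

variable {n : ℕ} {F : Type*} [Field F]

def nonInversions (σ : Equiv.Perm (Fin n)) : Finset (Fin n × Fin n) :=
  Finset.univ.filter fun p => p.1 < p.2 ∧ σ p.1 < σ p.2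

def unipSupportedOn (F : Type*) [Field F] (P : Finset (Fin n × Fin n)) :
    Set (Matrix (Fin n) (Fin n) F) :=
  {u | IsUnipUpper u ∧ ∀ i j, i < j → (i, j) ∉ P → u i j = 0}

theorem stabU_cosetOf_permMat (σ : Equiv.Perm (Fin n)) :
    stabU (cosetOf (permMat n F σ)) = unipSupportedOn F (nonInversions σ) := by
  ext u
  refine and_congr_right fun hu => (image_mul_cosetOf_permMat_eq_iff σ hu).trans ?_
  simp only [nonInversions, Finset.mem_filter, Finset.mem_univ, true_and, not_and, not_lt]
  constructor
  · exact fun h i j hij hσ => h i j ((hσ hij).lt_of_ne (σ.injective.ne hij.ne'))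
  · intro h i j hσ
    rcases lt_trichotomy i j with hij | rfl | hji
    · exact h i j hij fun _ => hσ.le
    · exact absurd hσ (lt_irrefl _)
    · exact hu.1 i j hji

theorem unipSupportedOn_empty : unipSupportedOn F (∅ : Finset (Fin n × Fin n)) = {1} := by
  ext u
  refine ⟨fun ⟨hu, h⟩ => ?_, fun hu => hu ▸ ⟨IsUnipUpper.one, fun i j hij _ => ?_⟩⟩
  · ext i j
    rcases lt_trichotomy i j with hij | rfl | hji
    · rw [h i j hij (Finset.notMem_empty _), Matrix.one_apply_ne hij.ne]
    · rw [hu.2, Matrix.one_apply_eq]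
    · rw [hu.1 i j hji, Matrix.one_apply_ne hji.ne']
  · exact Matrix.one_apply_ne hij.ne

theorem nonInversions_revPerm : nonInversions (Fin.revPerm : Equiv.Perm (Fin n)) = ∅ := by
  ext p
  simpa [nonInversions, Fin.rev_lt_rev] using le_of_lt

theorem burnsideFlagKernel_of_stabU_eq_singleton_one {S : Set (Matrix (Fin n) (Fin n) F)}
    (hS : stabU S = {1}) (T : Set (Matrix (Fin n) (Fin n) F)) :
    burnsideFlagKernel S T = (Nat.card (flagSpace n F) : ℝ)⁻¹ := by
  have hone : (1 : Matrix (Fin n) (Fin n) F) ∈ stabU T := ⟨IsUnipUpper.one, by simp⟩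
  have hfix : fixFlags (1 : Matrix (Fin n) (Fin n) F) = flagSpace n F := by
    ext; simp [fixFlags]
  rw [burnsideFlagKernel, hS, Set.singleton_inter_of_mem hone, finsum_mem_singleton, hfix]
  simp

theorem burnsideFlagKernel_cosetOf_permMat_revPerm (T : Set (Matrix (Fin n) (Fin n) F)) :
    burnsideFlagKernel (cosetOf (permMat n F Fin.revPerm)) T =
      (Nat.card (flagSpace n F) : ℝ)⁻¹ := by
  refine burnsideFlagKernel_of_stabU_eq_singleton_one ?_ T
  rw [stabU_cosetOf_permMat, nonInversions_revPerm, unipSupportedOn_empty]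

end Stabilizers

section Counting

variable {n : ℕ} {F : Type*} [Field F]

def upperPairs (n : ℕ) : Finset (Fin n × Fin n) :=
  Finset.univ.filter fun p => p.1 < p.2

theorem card_nonInversions_add_lenPerm (σ : Equiv.Perm (Fin n)) :
    (nonInversions σ).card + lenPerm σ = (upperPairs n).card := by
  rw [← Finset.card_filter_add_card_filter_not (s := upperPairs n) fun p => σ p.1 < σ p.2,
    nonInversions, lenPerm, upperPairs, Finset.filter_filter, Finset.filter_filter]
  congr 2
  refine Finset.filter_congr fun p _ => and_congr_right fun hp => ?_
  exact (not_lt.trans (σ.injective.ne hp.ne').le_iff_lt).symm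

theorem apply_eq_one_apply_of_mem_unipSupportedOn {P : Finset (Fin n × Fin n)}
    {u : Matrix (Fin n) (Fin n) F} (hu : u ∈ unipSupportedOn F P) {i j : Fin n}
    (hij : (i, j) ∉ P) : u i j = (1 : Matrix (Fin n) (Fin n) F) i j := by
  rcases lt_trichotomy i j with h | rfl | h
  · rw [hu.2 i j h hij, Matrix.one_apply_ne h.ne]
  · rw [hu.1.2, Matrix.one_apply_eq]
  · rw [hu.1.1 i j h, Matrix.one_apply_ne h.ne']

def unipSupportedOnEquiv {P : Finset (Fin n × Fin n)} (hP : ∀ p ∈ P, p.1 < p.2) :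
    unipSupportedOn F P ≃ (P → F) where
  toFun u p := u.1 p.1.1 p.1.2
  invFun f := ⟨Matrix.of fun i j =>
      if h : (i, j) ∈ P then f ⟨(i, j), h⟩ else (1 : Matrix (Fin n) (Fin n) F) i j, by
      have hlow : ∀ i j : Fin n, j ≤ i → (i, j) ∉ P := fun i j hji h => (hP _ h).not_ge hji
      refine ⟨⟨fun i j hji => ?_, fun i => ?_⟩, fun i j hij hP' => ?_⟩
      · simp [hlow i j hji.le, Matrix.one_apply_ne hji.ne']
      · simp [hlow i i le_rfl]
      · simp [hP', Matrix.one_apply_ne hij.ne]⟩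
  left_inv u := by
    ext i j
    by_cases h : (i, j) ∈ P
    · simp [h]
    · simp [h, apply_eq_one_apply_of_mem_unipSupportedOn u.2 h]
  right_inv f := funext fun p => dif_pos p.2

theorem card_unipSupportedOn [Fintype F] {P : Finset (Fin n × Fin n)}
    (hP : ∀ p ∈ P, p.1 < p.2) :
    Nat.card (unipSupportedOn F P) = Fintype.card F ^ P.card := by
  rw [Nat.card_congr (unipSupportedOnEquiv hP), Nat.card_fun, Nat.card_eq_fintype_card,
    Nat.card_eq_fintype_card, Fintype.card_coe]

theorem unipSupportedOn_upperPairs :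
    unipSupportedOn F (upperPairs n) = {u | IsUnipUpper u} := by
  ext u
  simpa [unipSupportedOn, upperPairs] using fun _ i j hij hji => absurd hij (not_lt.2 hji)

end Counting

section Orbits

open Pointwise MulAction

variable {n : ℕ} {F : Type*} [Field F]

def unipotentSubgroup (n : ℕ) (F : Type*) [Field F] : Subgroup (Matrix (Fin n) (Fin n) F)ˣ where
  carrier := {u | IsUnipUpper (u : Matrix (Fin n) (Fin n) F)}
  mul_mem' := IsUnipUpper.mul
  one_mem' := IsUnipUpper.one
  inv_mem' {u} hu := by
    simpa only [Set.mem_ofPred_eq, Matrix.coe_units_inv] using IsUnipUpper.inv hu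

def bruhatCell (F : Type*) [Field F] (σ : Equiv.Perm (Fin n)) :
    Set (Set (Matrix (Fin n) (Fin n) F)) :=
  {S | ∃ u, IsUnipUpper u ∧ S = cosetOf (u * permMat n F σ)}

theorem unipotentSubgroup.coe_injective :
    Function.Injective fun u : unipotentSubgroup n F => u.1.1 :=
  Units.val_injective.comp Subtype.val_injective

theorem unipotentSubgroup.range_coe :
    Set.range (fun u : unipotentSubgroup n F => u.1.1) =
      {u | IsUnipUpper u} := by
  ext u
  exact ⟨fun ⟨v, hv⟩ => hv ▸ v.2, fun hu => ⟨⟨hu.isUnit.unit, by exact hu⟩, rfl⟩⟩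

theorem unipotentSubgroup.smul_eq_image (u : unipotentSubgroup n F)
    (S : Set (Matrix (Fin n) (Fin n) F)) :
    u • S = (fun x => u.1.1 * x) '' S :=
  rfl

theorem unipotentSubgroup.image_coe_stabilizer (S : Set (Matrix (Fin n) (Fin n) F)) :
    (fun u : unipotentSubgroup n F => u.1.1) ''
      stabilizer (unipotentSubgroup n F) S = stabU S := by
  rw [show (stabilizer (unipotentSubgroup n F) S : Set (unipotentSubgroup n F)) =
      (fun u : unipotentSubgroup n F => u.1.1) ⁻¹'
        {u | (fun x => u * x) '' S = S} from rfl,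
    Set.image_preimage_eq_inter_range, range_coe, stabU, Set.inter_comm]
  rfl

theorem unipotentSubgroup.orbit_cosetOf (g : Matrix (Fin n) (Fin n) F) :
    orbit (unipotentSubgroup n F) (cosetOf g) =
      {S | ∃ u, IsUnipUpper u ∧ S = cosetOf (u * g)} := by
  ext S
  constructor
  · rintro ⟨u, rfl⟩
    exact ⟨_, u.2, (smul_eq_image u _).trans (image_mul_cosetOf _ _)⟩
  · rintro ⟨u, hu, rfl⟩
    exact ⟨⟨hu.isUnit.unit, by exact hu⟩, (smul_eq_image _ _).trans (image_mul_cosetOf _ _)⟩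

theorem card_unipotentSubgroup [Fintype F] :
    Nat.card (unipotentSubgroup n F) = Fintype.card F ^ (upperPairs n).card := by
  rw [← Nat.card_range_of_injective unipotentSubgroup.coe_injective,
    unipotentSubgroup.range_coe, ← unipSupportedOn_upperPairs,
    card_unipSupportedOn (P := upperPairs n) fun p hp => (Finset.mem_filter.1 hp).2]

theorem card_stabilizer_cosetOf_permMat [Fintype F] (σ : Equiv.Perm (Fin n)) :
    Nat.card (stabilizer (unipotentSubgroup n F) (cosetOf (permMat n F σ))) =
      Fintype.card F ^ (nonInversions σ).card := by
  have h := Nat.card_image_of_injective unipotentSubgroup.coe_injective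
    (SetLike.coe (stabilizer (unipotentSubgroup n F) (cosetOf (permMat n F σ))))
  rwa [unipotentSubgroup.image_coe_stabilizer, stabU_cosetOf_permMat,
    card_unipSupportedOn (P := nonInversions σ) fun p hp => (Finset.mem_filter.1 hp).2.1,
    eq_comm] at h

theorem card_bruhatCell [Fintype F] (σ : Equiv.Perm (Fin n)) :
    Nat.card (bruhatCell F σ) = Fintype.card F ^ lenPerm σ := by
  have h := Nat.card_congr
    (orbitProdStabilizerEquivGroup (unipotentSubgroup n F) (cosetOf (permMat n F σ)))
  rw [Nat.card_prod, unipotentSubgroup.orbit_cosetOf, card_stabilizer_cosetOf_permMat,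
    card_unipotentSubgroup, ← card_nonInversions_add_lenPerm, pow_add] at h
  exact Nat.eq_of_mul_eq_mul_right (pow_pos Fintype.card_pos _) (h.trans (mul_comm _ _))

end Orbits

theorem burnside_step_from_w0_is_mallows_general (q n : ℕ) (F : Type*)
    [Field F] [Fintype F] (hF : Fintype.card F = q) (σ : Equiv.Perm (Fin n)) :
    ∑ᶠ T ∈ {S : Set (Matrix (Fin n) (Fin n) F) |
        ∃ u : Matrix (Fin n) (Fin n) F, IsUnipUpper u ∧ S = cosetOf (u * permMat n F σ)},
      burnsideFlagKernel (cosetOf (permMat n F Fin.revPerm)) T =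
      (q : ℝ) ^ lenPerm σ / (Nat.card ↥(flagSpace n F) : ℝ) := by
  change ∑ᶠ T ∈ bruhatCell F σ, _ = _
  rw [finsum_mem_congr rfl fun T _ => burnsideFlagKernel_cosetOf_permMat_revPerm T,
    finsum_mem_const (Set.toFinite _), ← Nat.card_coe_set_eq, card_bruhatCell, hF,
    nsmul_eq_mul, div_eq_mul_inv, Nat.cast_pow]

/-- One step of the Burnside process from the longest element samples the
Mallows measure: with `w₀(i) = n+1−i` the longest permutation, for every
`σ ∈ S_n` one has `Σ_{y ∈ C_σ} P(M_{w₀}·B, y) = q^{ℓ(σ)} / |G/B|`, where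
`C_σ = {u·M_σ·B : u ∈ U} ⊆ G/B` is the Bruhat cell of `σ`. -/
theorem burnside_step_from_w0_is_mallows (q n : ℕ) (hn : 1 ≤ n) (F : Type*)
    [Field F] [Fintype F] (hF : Fintype.card F = q) (σ : Equiv.Perm (Fin n)) :
    ∑ᶠ T ∈ {S : Set (Matrix (Fin n) (Fin n) F) |
        ∃ u : Matrix (Fin n) (Fin n) F, IsUnipUpper u ∧ S = cosetOf (u * permMat n F σ)},
      burnsideFlagKernel (cosetOf (permMat n F Fin.revPerm)) T =
      (q : ℝ) ^ lenPerm σ / (Nat.card ↥(flagSpace n F) : ℝ) :=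
  burnside_step_from_w0_is_mallows_general q n F hF σ
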